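/- arXiv:2512.16655 — 2 statements merged into one kernel-verified Lean document; each statement's English description precedes it below -/
import Mathlib

section
/- Let 1 ≤ k ≤ n and λ ∈ Γ_k. Then ((n−k+1)/k)·σ_k(λ)^{(1−k)/k}·σ_{k−1}(λ) ≥ (C_n^k)^{1/k}; equivalently, the sum of the partial derivatives of the function λ ↦ σ_k(λ)^{1/k} at λ is at least (C_n^k)^{1/k}. -/
open Finset

/-- The `k`-th elementary symmetric function of the entries of `lam` indexed by `s`. -/
noncomputable def esymmOn {n : ℕ} (s : Finset (Fin n)) (k : ℕ) (lam : Fin n → ℝ) : ℝ :=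
  ∑ S ∈ s.powersetCard k, ∏ i ∈ S, lam i

/-- `σ_k(λ)`. -/
noncomputable def esymm {n : ℕ} (k : ℕ) (lam : Fin n → ℝ) : ℝ :=
  esymmOn Finset.univ k lam

/-- `σ_k(λ|i)`: the `k`-th elementary symmetric function with the `i`-th entry deleted. -/
noncomputable def esymmDel {n : ℕ} (i : Fin n) (k : ℕ) (lam : Fin n → ℝ) : ℝ :=
  esymmOn (Finset.univ.erase i) k lam

/-- `σ_k(λ|ij)`: the `k`-th elementary symmetric function with the `i`-th and `j`-th
entries deleted. -/
noncomputable def esymmDel2 {n : ℕ} (i j : Fin n) (k : ℕ) (lam : Fin n → ℝ) : ℝ :=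
  esymmOn ((Finset.univ.erase i).erase j) k lam

/-- The Gårding cone `Γ_k`: all `λ` with `σ_i(λ) > 0` for `1 ≤ i ≤ k`. -/
def GardingCone (n k : ℕ) : Set (Fin n → ℝ) :=
  {lam | ∀ i : ℕ, 1 ≤ i → i ≤ k → 0 < esymm i lam}

/-!
Write `E_j = σ_j / C(m, j)` for the normalized elementary symmetric means of a multiset of `m`
reals. By Rolle's theorem the derivative of `∏ (X - λᵢ)` again has only real roots, and these
roots have the same means `E_j` for `j < m`; inverting the entries reverses the sequence of
means. Together they reduce Newton's inequality `E_j E_{j+2} ≤ E_{j+1}²` to the case of two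
numbers, where it is `xy ≤ ((x + y)/2)²`. Newton's inequalities chain to Maclaurin's
`E_k^(k-1) ≤ E_{k-1}^k` as long as the means are positive, which holds on `Γ_k`; taking `k`-th
roots and using `(n - k + 1)/k = C(n, k)/C(n, k - 1)` gives the bound.
-/

open Polynomial

namespace Polynomial

theorem card_roots_derivative_eq_natDegree {p : ℝ[X]}
    (hp : Multiset.card p.roots = p.natDegree) :
    Multiset.card p.derivative.roots = p.derivative.natDegree := by
  refine le_antisymm (card_roots' _) ?_
  have := card_roots_le_derivative p
  rw [natDegree_derivative]
  omega

theorem natDegree_mul_esymm_roots_derivative {p : ℝ[X]}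
    (hp : Multiset.card p.roots = p.natDegree) {j : ℕ} (hj : j < p.natDegree) :
    p.natDegree * p.derivative.roots.esymm j = (p.natDegree - j : ℕ) * p.roots.esymm j := by
  have hcoeff := coeff_derivative p (p.natDegree - 1 - j)
  rw [coeff_eq_esymm_roots_of_card (card_roots_derivative_eq_natDegree hp) (by simp),
    coeff_eq_esymm_roots_of_card hp (by omega)] at hcoeff
  simp only [leadingCoeff_derivative, natDegree_derivative] at hcoeff
  rw [show p.natDegree - 1 - (p.natDegree - 1 - j) = j by omega,
    show p.natDegree - (p.natDegree - 1 - j + 1) = j by omega,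
    show ((p.natDegree - 1 - j : ℕ) : ℝ) + 1 = (p.natDegree - j : ℕ) by norm_cast; omega]
    at hcoeff
  have hlc : p.leadingCoeff * (-1) ^ j ≠ 0 :=
    mul_ne_zero (leadingCoeff_ne_zero.mpr (ne_zero_of_natDegree_gt hj)) (by simp)
  apply mul_left_cancel₀ hlc
  linear_combination hcoeff

end Polynomial

theorem Finset.sum_powersetCard_prod_inv_mul_prod {ι K : Type*} [Fintype ι] [DecidableEq ι]
    [Field K] (f : ι → K) (hf : ∀ i, f i ≠ 0) {j : ℕ} (hj : j ≤ Fintype.card ι) :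
    (∑ S ∈ univ.powersetCard j, ∏ i ∈ S, (f i)⁻¹) * ∏ i, f i =
      ∑ S ∈ univ.powersetCard (Fintype.card ι - j), ∏ i ∈ S, f i := by
  rw [sum_mul]
  refine sum_nbij' (fun S => Sᶜ) (fun S => Sᶜ) ?_ ?_ (fun S _ => compl_compl S)
    (fun S _ => compl_compl S) fun S _ => ?_
  · intro S hS
    rw [mem_powersetCard_univ] at hS ⊢
    rw [card_compl, hS]
  · intro S hS
    rw [mem_powersetCard_univ] at hS ⊢
    rw [card_compl, hS]
    omega
  · rw [← prod_mul_prod_compl S, ← mul_assoc, ← prod_mul_distrib,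
      prod_eq_one fun i _ => inv_mul_cancel₀ (hf i), one_mul]

theorem Multiset.esymm_map_inv_mul_prod {K : Type*} [Field K] (s : Multiset K) (hs : (0 : K) ∉ s)
    {j : ℕ} (hj : j ≤ Multiset.card s) :
    (s.map (·⁻¹)).esymm j * s.prod = s.esymm (Multiset.card s - j) := by
  classical
  rw [← s.map_univ_coe, Multiset.map_map, Finset.esymm_map_val, Finset.esymm_map_val,
    Finset.prod_map_val, Multiset.card_map, Finset.card_val, Finset.card_univ]
  exact sum_powersetCard_prod_inv_mul_prod _
    (fun x => ne_of_mem_of_not_mem (Multiset.coe_mem (x := x)) hs) (by rwa [Multiset.card_coe])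

noncomputable def esymmMean (s : Multiset ℝ) (j : ℕ) : ℝ :=
  s.esymm j / (Multiset.card s).choose j

open Multiset

@[simp]
theorem esymmMean_zero (s : Multiset ℝ) : esymmMean s 0 = 1 := by
  simp [esymmMean, Multiset.esymm]

theorem esymmMean_card (s : Multiset ℝ) : esymmMean s (card s) = s.prod := by
  simp [esymmMean, Multiset.esymm]

theorem esymmMean_map_inv (s : Multiset ℝ) (hs : (0 : ℝ) ∉ s) {j : ℕ} (hj : j ≤ card s) :
    esymmMean (s.map (·⁻¹)) j = esymmMean s (card s - j) / s.prod := by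
  have hprod : s.prod ≠ 0 := prod_ne_zero hs
  rw [esymmMean, esymmMean, Multiset.card_map, Nat.choose_symm hj,
    ← esymm_map_inv_mul_prod s hs hj]
  field_simp

theorem exists_esymmMean_eq_of_card_eq_succ {s : Multiset ℝ} {m : ℕ}
    (hs : card s = m + 1) :
    ∃ t : Multiset ℝ, card t = m ∧ ∀ j ≤ m, esymmMean t j = esymmMean s j := by
  set p : ℝ[X] := (s.map fun r => X - C r).prod
  have hroots : p.roots = s := roots_multiset_prod_X_sub_C s
  have hdeg : p.natDegree = m + 1 := by rw [natDegree_multiset_prod_X_sub_C_eq_card, hs]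
  have hp : card p.roots = p.natDegree := by rw [hroots, hdeg, hs]
  refine ⟨p.derivative.roots, ?_, fun j hj => ?_⟩
  · rw [card_roots_derivative_eq_natDegree hp, natDegree_derivative, hdeg, Nat.add_sub_cancel]
  have key := natDegree_mul_esymm_roots_derivative hp (j := j) (by omega)
  rw [hroots, hdeg] at key
  have hchoose : ((m + 1 : ℕ) : ℝ) * m.choose j = (m + 1).choose j * (m + 1 - j : ℕ) := by
    exact_mod_cast (Nat.add_one_mul_choose_eq m j).trans (Nat.choose_succ_right_eq (m + 1) j)
  have hm : ((m + 1 : ℕ) : ℝ) ≠ 0 := by positivity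
  rw [esymmMean, esymmMean, card_roots_derivative_eq_natDegree hp, natDegree_derivative, hdeg,
    Nat.add_sub_cancel, hs, div_eq_div_iff (by exact_mod_cast (Nat.choose_pos hj).ne')
    (by exact_mod_cast (Nat.choose_pos (by omega)).ne')]
  apply mul_left_cancel₀ hm
  linear_combination ((m + 1).choose j : ℝ) * key - s.esymm j * hchoose

theorem exists_esymmMean_eq_of_le_card (s : Multiset ℝ) {k : ℕ} (hk : k ≤ card s) :
    ∃ t : Multiset ℝ, card t = k ∧ ∀ j ≤ k, esymmMean t j = esymmMean s j := by
  obtain ⟨d, hd⟩ := Nat.exists_eq_add_of_le hk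
  induction d generalizing s with
  | zero => exact ⟨s, hd, fun _ _ => rfl⟩
  | succ d ih =>
    obtain ⟨t, ht, hts⟩ := exists_esymmMean_eq_of_card_eq_succ (m := k + d) hd
    obtain ⟨u, hu, hut⟩ := ih t (by omega) ht
    exact ⟨u, hu, fun j hj => (hut j hj).trans (hts j (by omega))⟩

theorem esymmMean_two_le_sq {s : Multiset ℝ} (hs : 2 ≤ card s) :
    esymmMean s 2 ≤ esymmMean s 1 ^ 2 := by
  obtain ⟨t, ht, hts⟩ := exists_esymmMean_eq_of_le_card s hs
  rw [← hts 1 (by omega), ← hts 2 le_rfl, esymmMean, esymmMean, ht]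
  obtain ⟨x, y, rfl⟩ := card_eq_two.mp ht
  rw [insert_eq_cons, esymm_pair_one, esymm_pair_two]
  simp only [Nat.choose_self, Nat.choose_one_right, Nat.cast_one, Nat.cast_ofNat, div_one]
  nlinarith [sq_nonneg (x - y)]

theorem esymmMean_mul_le_sq {s : Multiset ℝ} {j : ℕ} (hj : j + 2 ≤ card s) :
    esymmMean s j * esymmMean s (j + 2) ≤ esymmMean s (j + 1) ^ 2 := by
  obtain ⟨t, ht, hts⟩ := exists_esymmMean_eq_of_le_card s hj
  rw [← hts j (by omega), ← hts (j + 1) (by omega), ← hts (j + 2) le_rfl, ← ht,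
    esymmMean_card]
  by_cases h0 : (0 : ℝ) ∈ t
  · rw [prod_eq_zero h0, mul_zero]
    positivity
  have hP : t.prod ≠ 0 := prod_ne_zero h0
  have key := esymmMean_two_le_sq (s := t.map (·⁻¹)) (by rw [Multiset.card_map]; omega)
  rw [esymmMean_map_inv t h0 (by omega), esymmMean_map_inv t h0 (by omega),
    show card t - 2 = j by omega, show card t - 1 = j + 1 by omega, div_pow,
    le_div_iff₀ (by positivity)] at key
  calc esymmMean t j * t.prod = esymmMean t j / t.prod * t.prod ^ 2 := by field_simp
    _ ≤ esymmMean t (j + 1) ^ 2 := key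

theorem esymmMean_pow_le_pow {s : Multiset ℝ} {k : ℕ} (hk : k + 1 ≤ card s)
    (hpos : ∀ i ≤ k + 1, 0 < esymmMean s i) :
    esymmMean s (k + 1) ^ k ≤ esymmMean s k ^ (k + 1) := by
  induction k with
  | zero => simp
  | succ k ih =>
    have hk0 := hpos k (by omega)
    have hk1 := hpos (k + 1) (by omega)
    have hk2 := hpos (k + 2) le_rfl
    have IH := ih (by omega) fun i hi => hpos i (by omega)
    refine le_of_mul_le_mul_right ?_ (pow_pos hk0 (k + 1))
    calc esymmMean s (k + 2) ^ (k + 1) * esymmMean s k ^ (k + 1)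
        = (esymmMean s k * esymmMean s (k + 2)) ^ (k + 1) := by ring
      _ ≤ (esymmMean s (k + 1) ^ 2) ^ (k + 1) := by
          gcongr
          exact esymmMean_mul_le_sq hk
      _ = esymmMean s (k + 1) ^ (k + 2) * esymmMean s (k + 1) ^ k := by ring
      _ ≤ esymmMean s (k + 1) ^ (k + 2) * esymmMean s k ^ (k + 1) := by gcongr

theorem Nat.cast_choose_div_choose_sub_one {n k : ℕ} (hk1 : 1 ≤ k) (hkn : k ≤ n) :
    (n.choose k : ℝ) / n.choose (k - 1) = ((n : ℝ) - k + 1) / k := by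
  have h := Nat.choose_succ_right_eq n (k - 1)
  rw [Nat.sub_add_cancel hk1] at h
  rw [div_eq_div_iff (by exact_mod_cast (Nat.choose_pos (by omega)).ne') (by positivity)]
  have : ((n - (k - 1) : ℕ) : ℝ) = (n : ℝ) - k + 1 := by
    rw [Nat.cast_sub (by omega), Nat.cast_sub hk1]; ring
  rw [← this, mul_comm _ (n.choose (k - 1) : ℝ)]
  exact_mod_cast h

theorem one_le_rpow_mul_of_pow_le {x y : ℝ} (hx : 0 < x) (hy : 0 ≤ y) {k : ℕ} (hk : 1 ≤ k)
    (h : x ^ (k - 1) ≤ y ^ k) : 1 ≤ x ^ ((1 - (k : ℝ)) / k) * y := by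
  have hk0 : (k : ℝ) ≠ 0 := by positivity
  have hroot : x ^ (((k : ℝ) - 1) / k) ≤ y := by
    calc x ^ (((k : ℝ) - 1) / k) = (x ^ (k - 1)) ^ ((k : ℝ)⁻¹) := by
          rw [← Real.rpow_natCast, ← Real.rpow_mul hx.le, Nat.cast_sub hk, Nat.cast_one,
            div_eq_mul_inv]
      _ ≤ (y ^ k) ^ ((k : ℝ)⁻¹) := by gcongr
      _ = y := Real.pow_rpow_inv_natCast hy (by omega)
  calc 1 = x ^ ((1 - (k : ℝ)) / k) * x ^ (((k : ℝ) - 1) / k) := by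
        rw [← Real.rpow_add hx, show (1 - (k : ℝ)) / k + (k - 1) / k = 0 by ring,
          Real.rpow_zero]
    _ ≤ x ^ ((1 - (k : ℝ)) / k) * y := by gcongr

theorem esymm_eq_multiset_esymm {n : ℕ} (k : ℕ) (lam : Fin n → ℝ) :
    esymm k lam = (Finset.univ.val.map lam).esymm k :=
  (Finset.esymm_map_val lam Finset.univ k).symm

theorem esymmMean_pos_of_mem_gardingCone {n k : ℕ} (hkn : k ≤ n) {lam : Fin n → ℝ}
    (hGamma : lam ∈ GardingCone n k) {i : ℕ} (hi : i ≤ k) :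
    0 < esymmMean (Finset.univ.val.map lam) i := by
  rcases Nat.eq_zero_or_pos i with rfl | hi0
  · simp
  · rw [esymmMean, ← esymm_eq_multiset_esymm, Multiset.card_map, Finset.card_val,
      Finset.card_univ, Fintype.card_fin]
    exact div_pos (hGamma i hi0 hi) (by exact_mod_cast Nat.choose_pos (by omega))

theorem sum_derivatives_lower_bound (n k : ℕ) (hk1 : 1 ≤ k) (hkn : k ≤ n)
    (lam : Fin n → ℝ) (hGamma : lam ∈ GardingCone n k) :
    (((n : ℝ) - k + 1) / k) * (esymm k lam) ^ (((1 : ℝ) - k) / k) * esymm (k - 1) lam ≥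
      (n.choose k : ℝ) ^ ((1 : ℝ) / k) := by
  set s := Finset.univ.val.map lam
  have hs : card s = n := by simp [s]
  have hmean : ∀ i ≤ k, 0 < esymmMean s i := fun i hi =>
    esymmMean_pos_of_mem_gardingCone hkn hGamma hi
  have hmaclaurin : esymmMean s k ^ (k - 1) ≤ esymmMean s (k - 1) ^ k := by
    obtain ⟨k, rfl⟩ := Nat.exists_eq_add_of_le' hk1
    exact esymmMean_pow_le_pow (by omega) hmean
  have hc : (0 : ℝ) < n.choose k := by exact_mod_cast Nat.choose_pos hkn
  have key := one_le_rpow_mul_of_pow_le (hmean k le_rfl) (hmean (k - 1) (by omega)).le hk1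
    hmaclaurin
  rw [esymmMean, esymmMean, hs, ← esymm_eq_multiset_esymm, ← esymm_eq_multiset_esymm,
    Real.div_rpow (hGamma k hk1 le_rfl).le hc.le] at key
  have hcpow : (n.choose k : ℝ) ^ ((1 : ℝ) / k) =
      n.choose k * (n.choose k : ℝ) ^ ((1 - (k : ℝ)) / k) := by
    rw [← Real.rpow_one_add' hc.le (by field_simp; simp; omega)]
    congr 1
    field_simp
    ring
  rw [← Nat.cast_choose_div_choose_sub_one hk1 hkn, ge_iff_le, hcpow]
  calc _ = _ * 1 := (mul_one _).symm
    _ ≤ _ := mul_le_mul_of_nonneg_left key (by positivity)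
    _ = _ := by field_simp
end

section
/- Let μ = (μ_1,…,μ_m) ∈ ℝ^m have all entries nonnegative, and let integers k, l satisfy k ≥ 2 and l ≥ k−1. Then σ_l(μ)·σ_{k−2}(μ) ≤ σ_{l−1}(μ)·σ_{k−1}(μ). -/
open Finset

lemma esymmOn_zero {n : ℕ} (s : Finset (Fin n)) (lam : Fin n → ℝ) :
    esymmOn s 0 lam = 1 := by
  simp [esymmOn]

lemma esymmOn_nonneg {n : ℕ} (s : Finset (Fin n)) (k : ℕ) (lam : Fin n → ℝ)
    (h : ∀ i, 0 ≤ lam i) : 0 ≤ esymmOn s k lam := by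
  apply Finset.sum_nonneg
  intro S _
  exact Finset.prod_nonneg fun i _ => h i

lemma esymmOn_empty_succ {n : ℕ} (k : ℕ) (lam : Fin n → ℝ) :
    esymmOn (∅ : Finset (Fin n)) (k+1) lam = 0 := by
  rw [esymmOn, Finset.powersetCard_eq_empty.mpr (by simp), Finset.sum_empty]

lemma esymmOn_insert {n : ℕ} {s : Finset (Fin n)} {i : Fin n} (h : i ∉ s)
    (k : ℕ) (lam : Fin n → ℝ) :
    esymmOn (insert i s) (k+1) lam
      = esymmOn s (k+1) lam + lam i * esymmOn s k lam := by
  unfold esymmOn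
  rw [Finset.powersetCard_succ_insert h, Finset.sum_union, Finset.sum_image]
  · congr 1
    rw [Finset.mul_sum]
    apply Finset.sum_congr rfl
    intro t ht
    rw [Finset.prod_insert]
    intro hit
    exact h ((Finset.mem_powersetCard.mp ht).1 hit)
  · intro t ht u hu he
    have hit : i ∉ t := fun hh => h ((Finset.mem_powersetCard.mp ht).1 hh)
    have hiu : i ∉ u := fun hh => h ((Finset.mem_powersetCard.mp hu).1 hh)
    have := congrArg (Finset.erase · i) he
    simpa [Finset.erase_insert, hit, hiu] using this
  · rw [Finset.disjoint_right]
    intro t ht hts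
    simp only [Finset.mem_image] at ht
    obtain ⟨u, hu, rfl⟩ := ht
    have := (Finset.mem_powersetCard.mp hts).1 (Finset.mem_insert_self i u)
    exact h this

lemma esymmOn_step {n : ℕ} (lam : Fin n → ℝ) (h : ∀ i, 0 ≤ lam i) (s : Finset (Fin n)) :
    ∀ a b : ℕ, b ≤ a →
    esymmOn s (a+1) lam * esymmOn s b lam ≤ esymmOn s a lam * esymmOn s (b+1) lam := by
  induction s using Finset.induction_on with
  | empty =>
    intro a b _
    rw [esymmOn_empty_succ, zero_mul]
    exact mul_nonneg (esymmOn_nonneg _ _ _ h) (esymmOn_nonneg _ _ _ h)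
  | @insert i s hi ih =>
    intro a b hba
    rcases eq_or_lt_of_le hba with rfl | hlt
    · rw [mul_comm]
    · obtain ⟨d, rfl⟩ : ∃ d, a = d + 1 := ⟨a - 1, by omega⟩
      set x := lam i with hxdef
      have hx : 0 ≤ x := h i
      cases b with
      | zero =>
        rw [esymmOn_zero, esymmOn_insert hi, esymmOn_insert hi, esymmOn_insert hi,
          esymmOn_zero]
        have h1 := ih (d + 1) 0 (Nat.zero_le _)
        rw [esymmOn_zero, mul_one] at h1
        have n0 := esymmOn_nonneg s d lam h
        have n1 := esymmOn_nonneg s (d+1) lam h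
        have n2 := esymmOn_nonneg s 1 lam h
        nlinarith [mul_nonneg hx (mul_nonneg n0 n2), mul_nonneg (mul_nonneg hx hx) n0]
      | succ e =>
        have hed : e + 1 ≤ d := by omega
        rw [esymmOn_insert hi, esymmOn_insert hi, esymmOn_insert hi, esymmOn_insert hi]
        have h1 := ih (d + 1) (e + 1) (by omega)
        have h2 := ih (d + 1) e (by omega)
        have h3 := ih d (e + 1) (by omega)
        have h4 := ih d e (by omega)
        have hchain : esymmOn s (d+2) lam * esymmOn s e lam
            ≤ esymmOn s d lam * esymmOn s (e+2) lam := le_trans h2 h3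
        have n0 := esymmOn_nonneg s d lam h
        have n1 := esymmOn_nonneg s (d+1) lam h
        have n2 := esymmOn_nonneg s e lam h
        have n3 := esymmOn_nonneg s (e+1) lam h
        nlinarith [mul_le_mul_of_nonneg_left hchain hx,
          mul_le_mul_of_nonneg_left h4 (mul_nonneg hx hx), h1]

theorem sigma_product_ineq (m k l : ℕ) (hk : 2 ≤ k) (hl : k - 1 ≤ l)
    (mu : Fin m → ℝ) (hmu : ∀ i : Fin m, 0 ≤ mu i) :
    esymm l mu * esymm (k - 2) mu ≤ esymm (l - 1) mu * esymm (k - 1) mu := by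
  have key := esymmOn_step mu hmu Finset.univ (l - 1) (k - 2) (by omega)
  have h1 : l - 1 + 1 = l := by omega
  have h2 : k - 2 + 1 = k - 1 := by omega
  rw [h1, h2] at key
  simpa [esymm] using key
end
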